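/- arXiv:2207.00645 — 3 statements merged into one kernel-verified Lean document; each statement's English description precedes it below -/
import Mathlib

section
/- For the 3+3 product model on ℝ⁶ with both sectional curvatures μ and λ, the pointwise invariants take the values Q = −(24/25)(μ+λ)³, L₁ = 0, L₂ = −(36/25)(μ+λ)³, and L₃ = (18/25)(μ+λ)³, where Q := −(40/9)J³ + 16J|E|² − 16 tr E³ − 8 W_{ijkl}E^{ik}E^{jl}, L₁ := 96⟨E, tr W²⟩, L₂ := 16⟨E, tr W²⟩ − (4/3) J tr² W², L₃ := 4 tr² W³. -/
open Finset

/-- Kulkarni–Nomizu product of two 2-tensors: (S∧T)_{ijkl}. -/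
def KN {n : ℕ} (S T : Fin n → Fin n → ℝ) : Fin n → Fin n → Fin n → Fin n → ℝ :=
  fun i j k l => S i k * T j l + S j l * T i k - S i l * T j k - S j k * T i l

/-- Composition of 2-tensors (as endomorphisms, indices raised by the standard metric). -/
noncomputable def comp2 {n : ℕ} (S T : Fin n → Fin n → ℝ) : Fin n → Fin n → ℝ :=
  fun i j => ∑ u, S i u * T u j

/-- Composition of curvature-type 4-tensors: (A∘B)_{ijkl} = (1/2) A_{ij}^{uv} B_{uvkl}. -/
noncomputable def comp4 {n : ℕ} (A B : Fin n → Fin n → Fin n → Fin n → ℝ) :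
    Fin n → Fin n → Fin n → Fin n → ℝ :=
  fun i j k l => (1 / 2 : ℝ) * ∑ u, ∑ v, A i j u v * B u v k l

/-- Partial (Ricci-type) trace of a 4-tensor: (tr A)_{ij} = A_{iuj}^{u}. -/
noncomputable def ptr {n : ℕ} (A : Fin n → Fin n → Fin n → Fin n → ℝ) :
    Fin n → Fin n → ℝ :=
  fun i j => ∑ u, A i u j u

/-- Full trace of a 2-tensor. -/
noncomputable def tr2 {n : ℕ} (S : Fin n → Fin n → ℝ) : ℝ := ∑ i, S i i

/-- Inner product of 2-tensors (standard metric). -/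
noncomputable def inner2 {n : ℕ} (S T : Fin n → Fin n → ℝ) : ℝ := ∑ i, ∑ j, S i j * T i j

/-- The first-factor metric on ℝ^m ⊕ ℝ^{6-m} ≅ ℝ⁶, extended by zero. -/
def g6 (m : ℕ) : Fin 6 → Fin 6 → ℝ := fun i j => if i = j ∧ (i : ℕ) < m then 1 else 0

/-- The second-factor metric on ℝ^m ⊕ ℝ^{6-m} ≅ ℝ⁶, extended by zero. -/
def h6 (m : ℕ) : Fin 6 → Fin 6 → ℝ := fun i j => if i = j ∧ m ≤ (i : ℕ) then 1 else 0

/-- The standard inner product ḡ on ℝ⁶. -/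
def gb6 : Fin 6 → Fin 6 → ℝ := fun i j => if i = j then 1 else 0

/-- Curvature model of a product of spaceforms of dimensions m and 6−m with
sectional curvatures μ and ν: R = (μ/2) g∧g + (ν/2) h∧h. -/
noncomputable def Rm (m : ℕ) (μ ν : ℝ) : Fin 6 → Fin 6 → Fin 6 → Fin 6 → ℝ :=
  fun i j k l => (μ / 2) * KN (g6 m) (g6 m) i j k l + (ν / 2) * KN (h6 m) (h6 m) i j k l

/-- J = tr_ḡ(Ric)/10 in dimension six. -/
noncomputable def Jm (m : ℕ) (μ ν : ℝ) : ℝ := tr2 (ptr (Rm m μ ν)) / 10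

/-- Schouten tensor P = (Ric − Jḡ)/4 in dimension six. -/
noncomputable def Pm (m : ℕ) (μ ν : ℝ) : Fin 6 → Fin 6 → ℝ :=
  fun i j => (ptr (Rm m μ ν) i j - Jm m μ ν * gb6 i j) / 4

/-- Trace-free Schouten tensor E = P − (J/6)ḡ. -/
noncomputable def Em (m : ℕ) (μ ν : ℝ) : Fin 6 → Fin 6 → ℝ :=
  fun i j => Pm m μ ν i j - (Jm m μ ν / 6) * gb6 i j

/-- Weyl tensor W = R − P∧ḡ. -/
noncomputable def Wm (m : ℕ) (μ ν : ℝ) : Fin 6 → Fin 6 → Fin 6 → Fin 6 → ℝ :=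
  fun i j k l => Rm m μ ν i j k l - KN (Pm m μ ν) gb6 i j k l

/-- W² = W∘W. -/
noncomputable def W2m (m : ℕ) (μ ν : ℝ) := comp4 (Wm m μ ν) (Wm m μ ν)

/-- W³ = W∘W∘W. -/
noncomputable def W3m (m : ℕ) (μ ν : ℝ) := comp4 (Wm m μ ν) (W2m m μ ν)

/-- Q = −(40/9)J³ + 16J|E|² − 16 tr E³ − 8 W_{ijkl}E^{ik}E^{jl}. -/
noncomputable def Qm (m : ℕ) (μ ν : ℝ) : ℝ :=
  -(40 / 9) * (Jm m μ ν) ^ 3 + 16 * Jm m μ ν * inner2 (Em m μ ν) (Em m μ ν)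
    - 16 * tr2 (comp2 (Em m μ ν) (comp2 (Em m μ ν) (Em m μ ν)))
    - 8 * ∑ i, ∑ j, ∑ k, ∑ l, Wm m μ ν i j k l * Em m μ ν i k * Em m μ ν j l

/-- L₁ = 96⟨E, tr W²⟩. -/
noncomputable def L1m (m : ℕ) (μ ν : ℝ) : ℝ := 96 * inner2 (Em m μ ν) (ptr (W2m m μ ν))

/-- L₂ = 16⟨E, tr W²⟩ − (4/3) J tr² W². -/
noncomputable def L2m (m : ℕ) (μ ν : ℝ) : ℝ :=
  16 * inner2 (Em m μ ν) (ptr (W2m m μ ν)) - (4 / 3) * Jm m μ ν * tr2 (ptr (W2m m μ ν))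

/-- L₃ = 4 tr² W³. -/
noncomputable def L3m (m : ℕ) (μ ν : ℝ) : ℝ := 4 * tr2 (ptr (W3m m μ ν))

/-!
In the 3+3 model Ric = 2μ g + 2λ h, hence J = 3(μ+λ)/5, E = (μ−λ)/4 · (g − h) and
W = (μ+λ)/20 · W₀ with W₀ = 3 g∧g + 3 h∧h − 4 g∧h. Every invariant is therefore a monomial in
μ − λ and μ + λ times a fixed contraction of the integer tensors g − h and W₀, and these
contractions are evaluated exactly. As an operator on Λ², W₀ has eigenvalue 6 on
Λ²ℝ³ ⊕ Λ²ℝ³ and −4 on ℝ³ ⊗ ℝ³, which accounts for tr² W₀² = 2·360 and tr² W₀³ = 2·720.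
-/

section Homogeneity

variable {n : ℕ}

lemma comp2_smul_smul (a b : ℝ) (S T : Fin n → Fin n → ℝ) :
    comp2 (a • S) (b • T) = (a * b) • comp2 S T := by
  ext i j
  simp only [comp2, Pi.smul_apply, smul_eq_mul, Finset.mul_sum]
  exact Finset.sum_congr rfl fun u _ => by ring

lemma comp4_smul_smul (a b : ℝ) (A B : Fin n → Fin n → Fin n → Fin n → ℝ) :
    comp4 (a • A) (b • B) = (a * b) • comp4 A B := by
  ext i j k l
  simp only [comp4, Pi.smul_apply, smul_eq_mul, Finset.mul_sum]
  exact Finset.sum_congr rfl fun u _ => Finset.sum_congr rfl fun v _ => by ring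

lemma ptr_smul (a : ℝ) (A : Fin n → Fin n → Fin n → Fin n → ℝ) : ptr (a • A) = a • ptr A := by
  ext i j
  simp only [ptr, Pi.smul_apply, smul_eq_mul, Finset.mul_sum]

lemma tr2_smul (a : ℝ) (S : Fin n → Fin n → ℝ) : tr2 (a • S) = a * tr2 S := by
  simp only [tr2, Pi.smul_apply, smul_eq_mul, Finset.mul_sum]

lemma inner2_smul_smul (a b : ℝ) (S T : Fin n → Fin n → ℝ) :
    inner2 (a • S) (b • T) = a * b * inner2 S T := by
  simp only [inner2, Pi.smul_apply, smul_eq_mul, Finset.mul_sum]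
  exact Finset.sum_congr rfl fun i _ => Finset.sum_congr rfl fun j _ => by ring

lemma sum_smul_mul_smul_mul_smul (a b : ℝ) (W : Fin n → Fin n → Fin n → Fin n → ℝ)
    (E : Fin n → Fin n → ℝ) :
    ∑ i, ∑ j, ∑ k, ∑ l, (a • W) i j k l * (b • E) i k * (b • E) j l
      = a * b ^ 2 * ∑ i, ∑ j, ∑ k, ∑ l, W i j k l * E i k * E j l := by
  simp only [Pi.smul_apply, smul_eq_mul, Finset.mul_sum]
  exact Finset.sum_congr rfl fun i _ => Finset.sum_congr rfl fun j _ =>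
    Finset.sum_congr rfl fun k _ => Finset.sum_congr rfl fun l _ => by ring

end Homogeneity

lemma ptr_KN {n : ℕ} (S T : Fin n → Fin n → ℝ) (i j : Fin n) :
    ptr (KN S T) i j = S i j * tr2 T + tr2 S * T i j - comp2 S T i j - comp2 T S i j := by
  simp only [ptr, KN, tr2, comp2, Finset.sum_add_distrib, Finset.sum_sub_distrib,
    Finset.mul_sum, Finset.sum_mul]
  simp only [mul_comm (S _ j)]

lemma comp2_g6_self (m : ℕ) : comp2 (g6 m) (g6 m) = g6 m := by
  ext i j
  rcases eq_or_ne i j with rfl | h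
  · simp [comp2, g6, ite_and, Finset.sum_ite_eq']
  · simp [comp2, g6, ite_and, Finset.sum_ite_eq', h]

lemma comp2_h6_self (m : ℕ) : comp2 (h6 m) (h6 m) = h6 m := by
  ext i j
  rcases eq_or_ne i j with rfl | h
  · simp [comp2, h6, ite_and, Finset.sum_ite_eq']
  · simp [comp2, h6, ite_and, Finset.sum_ite_eq', h]

lemma gb6_eq_add (m : ℕ) (i j : Fin 6) : gb6 i j = g6 m i j + h6 m i j := by
  rcases eq_or_ne i j with rfl | h
  · by_cases hm : (i : ℕ) < m <;> simp [gb6, g6, h6, hm]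
  · simp [gb6, g6, h6, h]

lemma tr2_g6_three : tr2 (g6 3) = 3 := by
  simp only [tr2, g6, Fin.sum_univ_six]; norm_num

lemma tr2_h6_three : tr2 (h6 3) = 3 := by
  simp only [tr2, h6, Fin.sum_univ_six]; norm_num

def gZ : Fin 6 → Fin 6 → ℤ := fun i j => if i = j ∧ (i : ℕ) < 3 then 1 else 0

def hZ : Fin 6 → Fin 6 → ℤ := fun i j => if i = j ∧ 3 ≤ (i : ℕ) then 1 else 0

def KNZ {n : ℕ} (S T : Fin n → Fin n → ℤ) : Fin n → Fin n → Fin n → Fin n → ℤ :=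
  fun i j k l => S i k * T j l + S j l * T i k - S i l * T j k - S j k * T i l

def prodInvZ : Fin 6 → Fin 6 → ℤ := fun i j => gZ i j - hZ i j

def weylUnitZ : Fin 6 → Fin 6 → Fin 6 → Fin 6 → ℤ :=
  fun i j k l => 3 * KNZ gZ gZ i j k l + 3 * KNZ hZ hZ i j k l - 4 * KNZ gZ hZ i j k l

def prodInv : Fin 6 → Fin 6 → ℝ := fun i j => prodInvZ i j

def weylUnit : Fin 6 → Fin 6 → Fin 6 → Fin 6 → ℝ := fun i j k l => weylUnitZ i j k l

lemma intCast_gZ (i j : Fin 6) : (gZ i j : ℝ) = g6 3 i j := by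
  simp only [gZ, g6]
  split_ifs <;> norm_num

lemma intCast_hZ (i j : Fin 6) : (hZ i j : ℝ) = h6 3 i j := by
  simp only [hZ, h6]
  split_ifs <;> norm_num

lemma prodInv_apply (i j : Fin 6) : prodInv i j = g6 3 i j - h6 3 i j := by
  simp only [prodInv, prodInvZ]
  push_cast [intCast_gZ, intCast_hZ]
  rfl

lemma weylUnit_apply (i j k l : Fin 6) :
    weylUnit i j k l = 3 * KN (g6 3) (g6 3) i j k l + 3 * KN (h6 3) (h6 3) i j k l
      - 4 * KN (g6 3) (h6 3) i j k l := by
  simp only [weylUnit, weylUnitZ, KNZ, KN]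
  push_cast [intCast_gZ, intCast_hZ]
  rfl

-- `norm_cast` leaves a closed identity between integer sums, which it closes by evaluation.
lemma inner2_prodInv : inner2 prodInv prodInv = 6 := by
  unfold inner2 prodInv
  norm_cast

lemma tr2_comp2_prodInv_cube : tr2 (comp2 prodInv (comp2 prodInv prodInv)) = 0 := by
  unfold tr2 comp2 prodInv
  norm_cast

lemma sum_weylUnit_mul_prodInv_mul_prodInv :
    ∑ i, ∑ j, ∑ k, ∑ l, weylUnit i j k l * prodInv i k * prodInv j l = 144 := by
  unfold weylUnit prodInv
  norm_cast

lemma tr2_ptr_comp4_weylUnit : tr2 (ptr (comp4 weylUnit weylUnit)) = 720 := by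
  unfold tr2 ptr comp4 weylUnit
  simp only [← Finset.mul_sum]
  rw [show (720 : ℝ) = 1 / 2 * (1440 : ℤ) by norm_num]
  norm_cast

lemma inner2_prodInv_ptr_comp4_weylUnit :
    inner2 prodInv (ptr (comp4 weylUnit weylUnit)) = 0 := by
  unfold inner2 ptr comp4 weylUnit prodInv
  simp only [← Finset.mul_sum, mul_left_comm _ (1 / 2 : ℝ)]
  refine mul_eq_zero_of_right _ ?_
  norm_cast

lemma tr2_ptr_comp4_weylUnit_cube :
    tr2 (ptr (comp4 weylUnit (comp4 weylUnit weylUnit))) = 1440 := by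
  unfold tr2 ptr comp4 weylUnit
  simp only [← Finset.mul_sum, mul_left_comm _ (1 / 2 : ℝ)]
  rw [show (1440 : ℝ) = 1 / 2 * (1 / 2 * (5760 : ℤ)) by norm_num]
  norm_cast

section ProductModel

variable (μ ν : ℝ)

lemma ptr_Rm_three (i j : Fin 6) : ptr (Rm 3 μ ν) i j = 2 * μ * g6 3 i j + 2 * ν * h6 3 i j := by
  have h : ptr (Rm 3 μ ν) i j
      = μ / 2 * ptr (KN (g6 3) (g6 3)) i j + ν / 2 * ptr (KN (h6 3) (h6 3)) i j := by
    simp only [ptr, Rm, Finset.sum_add_distrib, Finset.mul_sum]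
  rw [h, ptr_KN, ptr_KN, comp2_g6_self, comp2_h6_self, tr2_g6_three, tr2_h6_three]
  ring

lemma Jm_three : Jm 3 μ ν = 3 * (μ + ν) / 5 := by
  have h : tr2 (ptr (Rm 3 μ ν)) = 2 * μ * tr2 (g6 3) + 2 * ν * tr2 (h6 3) := by
    simp only [tr2, ptr_Rm_three, Finset.sum_add_distrib, Finset.mul_sum]
  rw [Jm, h, tr2_g6_three, tr2_h6_three]
  ring

lemma Pm_three (i j : Fin 6) :
    Pm 3 μ ν i j = (7 * μ - 3 * ν) / 20 * g6 3 i j + (7 * ν - 3 * μ) / 20 * h6 3 i j := by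
  rw [Pm, ptr_Rm_three, Jm_three, gb6_eq_add 3]
  ring

lemma Em_three : Em 3 μ ν = ((μ - ν) / 4) • prodInv := by
  ext i j
  simp only [Em, Pm_three, Jm_three, gb6_eq_add 3, Pi.smul_apply, smul_eq_mul, prodInv_apply]
  ring

lemma Wm_three : Wm 3 μ ν = ((μ + ν) / 20) • weylUnit := by
  ext i j k l
  simp only [Wm, Rm, Pi.smul_apply, smul_eq_mul, weylUnit_apply, KN, Pm_three, gb6_eq_add 3]
  ring

lemma W2m_three : W2m 3 μ ν = ((μ + ν) / 20) ^ 2 • comp4 weylUnit weylUnit := by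
  rw [W2m, Wm_three, comp4_smul_smul, sq]

lemma W3m_three :
    W3m 3 μ ν = ((μ + ν) / 20) ^ 3 • comp4 weylUnit (comp4 weylUnit weylUnit) := by
  rw [W3m, W2m_three, Wm_three, comp4_smul_smul, ← pow_succ']

end ProductModel

theorem stmt9 (μ lam : ℝ) :
    Qm 3 μ lam = -(24 / 25) * (μ + lam) ^ 3 ∧
    L1m 3 μ lam = 0 ∧
    L2m 3 μ lam = -(36 / 25) * (μ + lam) ^ 3 ∧
    L3m 3 μ lam = (18 / 25) * (μ + lam) ^ 3 := by
  refine ⟨?_, ?_, ?_, ?_⟩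
  · rw [Qm, Jm_three, Em_three, Wm_three, inner2_smul_smul, comp2_smul_smul, comp2_smul_smul,
      tr2_smul, sum_smul_mul_smul_mul_smul, inner2_prodInv, tr2_comp2_prodInv_cube,
      sum_weylUnit_mul_prodInv_mul_prodInv]
    ring
  · rw [L1m, Em_three, W2m_three, ptr_smul, inner2_smul_smul, inner2_prodInv_ptr_comp4_weylUnit]
    ring
  · rw [L2m, Jm_three, Em_three, W2m_three, ptr_smul, inner2_smul_smul, tr2_smul,
      inner2_prodInv_ptr_comp4_weylUnit, tr2_ptr_comp4_weylUnit]
    ring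
  · rw [L3m, W3m_three, ptr_smul, tr2_smul, tr2_ptr_comp4_weylUnit_cube]
    ring
end

section
/- In the 2+4 product model on ℝ⁶ with μ = 1, λ = 0 (round S² times flat T⁴), the invariant Q = −(12/25). In particular Q < 0. -/
open Finset

/-! In the product S² × T⁴ only the sphere factor is curved, with R = ½ g∧g, so Ric = g. Hence
J = 1/5 and the Schouten tensor P and its trace-free part E are diagonal, constant on each
factor. The Weyl term W(E, E) is reduced to traces of products of diagonal matrices by the
contraction identity for Kulkarni–Nomizu products,
  (S∧T)(A, B) = ⟨S,A⟩⟨T,B⟩ + ⟨T,A⟩⟨S,B⟩ − ⟨S, A Tᵀ B⟩ − ⟨T, A Sᵀ B⟩,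
applied to W = ½ g∧g − P∧ḡ. This gives |E|² = 1/12, tr E³ = 1/144 and W(E, E) = 3/40, whence
Q = −8/225 + 4/15 − 1/9 − 3/5 = −12/25. -/

open Matrix

section Contraction

variable {n : ℕ}

theorem comp2_diagonal (a b : Fin n → ℝ) :
    comp2 (diagonal a) (diagonal b) = diagonal fun i => a i * b i :=
  diagonal_mul_diagonal a b

theorem tr2_diagonal (a : Fin n → ℝ) : tr2 (diagonal a) = ∑ i, a i :=
  trace_diagonal a

theorem inner2_diagonal (a b : Fin n → ℝ) :
    inner2 (diagonal a) (diagonal b) = ∑ i, a i * b i := by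
  simp [inner2, diagonal_apply, ite_mul]

theorem ptr_KN_apply (S T : Fin n → Fin n → ℝ) (i j : Fin n) :
    ptr (KN S T) i j = tr2 T * S i j + tr2 S * T i j - comp2 S T i j - comp2 T S i j := by
  simp only [ptr, KN, tr2, comp2, Finset.sum_add_distrib, Finset.sum_sub_distrib,
    ← Finset.mul_sum, ← Finset.sum_mul, mul_comm (S _ j) (T i _)]
  ring

theorem ptr_KN_self_apply_of_comp2_self (g : Fin n → Fin n → ℝ) (hg : comp2 g g = g)
    (i j : Fin n) : ptr (KN g g) i j = 2 * (tr2 g - 1) * g i j := by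
  rw [ptr_KN_apply, hg]
  ring

theorem sum_mul_mul_mul_eq_inner2_mul_inner2 (S T A B : Fin n → Fin n → ℝ) :
    ∑ i, ∑ j, ∑ k, ∑ l, S i k * A i k * (T j l * B j l) = inner2 S A * inner2 T B := by
  simp only [inner2, Finset.sum_mul_sum]

theorem sum_mul_mul_mul_mul_eq_inner2_comp2 (S T A B : Fin n → Fin n → ℝ) :
    ∑ i, ∑ j, ∑ k, ∑ l, S i l * T j k * A i k * B j l = inner2 S (comp2 A (comp2 Tᵀ B)) := by
  have reorder : ∀ i, ∑ j, ∑ k, ∑ l, S i l * T j k * A i k * B j l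
      = ∑ l, ∑ k, ∑ j, S i l * T j k * A i k * B j l := fun i =>
    Finset.sum_comm.trans ((Finset.sum_congr rfl fun k _ => Finset.sum_comm).trans Finset.sum_comm)
  simp only [reorder, inner2, comp2, Finset.mul_sum]
  refine Finset.sum_congr rfl fun i _ => Finset.sum_congr rfl fun l _ =>
    Finset.sum_congr rfl fun k _ => Finset.sum_congr rfl fun j _ => ?_
  rw [show Tᵀ k j = T j k from rfl]
  ring

theorem sum_KN_mul_mul (S T A B : Fin n → Fin n → ℝ) :
    ∑ i, ∑ j, ∑ k, ∑ l, KN S T i j k l * A i k * B j l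
      = inner2 S A * inner2 T B + inner2 T A * inner2 S B
        - inner2 S (comp2 A (comp2 Tᵀ B)) - inner2 T (comp2 A (comp2 Sᵀ B)) := by
  have expand : ∀ i j k l, KN S T i j k l * A i k * B j l
      = S i k * A i k * (T j l * B j l) + T i k * A i k * (S j l * B j l)
        - S i l * T j k * A i k * B j l - T i l * S j k * A i k * B j l := by
    intro i j k l
    simp only [KN]
    ring
  simp only [expand, Finset.sum_add_distrib, Finset.sum_sub_distrib,
    sum_mul_mul_mul_eq_inner2_mul_inner2, sum_mul_mul_mul_mul_eq_inner2_comp2]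

end Contraction

theorem g6_two : g6 2 = diagonal ![1, 1, 0, 0, 0, 0] := by
  ext i j
  fin_cases i <;> fin_cases j <;> simp [g6]

theorem gb6_eq_diagonal : gb6 = diagonal fun _ => 1 := rfl

theorem ptr_Rm_two : ptr (Rm 2 1 0) = g6 2 := by
  have hg : comp2 (g6 2) (g6 2) = g6 2 := by
    rw [g6_two, comp2_diagonal]
    congr 1
    ext i
    fin_cases i <;> simp
  have htr : tr2 (g6 2) = 2 := by
    rw [g6_two, tr2_diagonal]
    norm_num [Fin.sum_univ_succ]
  ext i j
  have hR : ptr (Rm 2 1 0) i j = 1 / 2 * ptr (KN (g6 2) (g6 2)) i j := by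
    simp only [ptr, Rm, zero_div, zero_mul, add_zero, Finset.mul_sum]
  rw [hR, ptr_KN_self_apply_of_comp2_self _ hg, htr]
  ring

theorem Jm_two : Jm 2 1 0 = 1 / 5 := by
  rw [Jm, ptr_Rm_two, g6_two, tr2_diagonal]
  norm_num [Fin.sum_univ_succ]

theorem Pm_two : Pm 2 1 0 = diagonal ![1 / 5, 1 / 5, -1 / 20, -1 / 20, -1 / 20, -1 / 20] := by
  ext i j
  rw [Pm, ptr_Rm_two, Jm_two, g6_two, gb6_eq_diagonal]
  rcases eq_or_ne i j with rfl | hij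
  · fin_cases i <;> norm_num
  · simp [hij]

theorem Em_two : Em 2 1 0 = diagonal ![1 / 6, 1 / 6, -1 / 12, -1 / 12, -1 / 12, -1 / 12] := by
  ext i j
  rw [Em, Pm_two, Jm_two, gb6_eq_diagonal]
  rcases eq_or_ne i j with rfl | hij
  · fin_cases i <;> norm_num
  · simp [hij]

theorem sum_Wm_Em_Em_two :
    ∑ i, ∑ j, ∑ k, ∑ l, Wm 2 1 0 i j k l * Em 2 1 0 i k * Em 2 1 0 j l = 3 / 40 := by
  have hW : ∀ i j k l, Wm 2 1 0 i j k l * Em 2 1 0 i k * Em 2 1 0 j l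
      = 1 / 2 * (KN (g6 2) (g6 2) i j k l * Em 2 1 0 i k * Em 2 1 0 j l)
        - KN (Pm 2 1 0) gb6 i j k l * Em 2 1 0 i k * Em 2 1 0 j l := by
    intro i j k l
    simp only [Wm, Rm]
    ring
  simp only [hW, Finset.sum_sub_distrib, ← Finset.mul_sum, sum_KN_mul_mul]
  rw [g6_two, Pm_two, Em_two, gb6_eq_diagonal]
  simp only [diagonal_transpose, comp2_diagonal, inner2_diagonal]
  norm_num [Fin.sum_univ_succ]

theorem stmt13 : Qm 2 1 0 = -(12 / 25) ∧ Qm 2 1 0 < 0 := by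
  have hQ : Qm 2 1 0 = -(12 / 25) := by
    rw [Qm, sum_Wm_Em_Em_two, Jm_two, Em_two, comp2_diagonal, comp2_diagonal, tr2_diagonal,
      inner2_diagonal]
    norm_num [Fin.sum_univ_succ]
  exact ⟨hQ, hQ ▸ by norm_num⟩
end

section
/- In the 2+4 product model on ℝ⁶, taking the 2-factor curvature λ and the 4-factor curvature λ/3 (so that the model is Einstein), one has E = 0 for the trace-free Schouten tensor E, L₁ = 0, L₂ = −(128/75)λ³, and L₃ = (832/225)λ³. -/
open Finset

section AuxStmt16
def gz : Fin 6 → Fin 6 → ℤ := fun i j => if i = j ∧ (i : ℕ) < 2 then 1 else 0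
def hz : Fin 6 → Fin 6 → ℤ := fun i j => if i = j ∧ 2 ≤ (i : ℕ) then 1 else 0
def gbz : Fin 6 → Fin 6 → ℤ := fun i j => if i = j then 1 else 0
def KNz (S T : Fin 6 → Fin 6 → ℤ) : Fin 6 → Fin 6 → Fin 6 → Fin 6 → ℤ :=
  fun i j k l => S i k * T j l + S j l * T i k - S i l * T j k - S j k * T i l
/-- 30 times the (λ-normalized) Weyl tensor; integer entries. -/
def wz : Fin 6 → Fin 6 → Fin 6 → Fin 6 → ℤ :=
  fun i j k l => 15 * KNz gz gz i j k l + 5 * KNz hz hz i j k l - 3 * KNz gbz gbz i j k l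
def S2z : Fin 6 → Fin 6 → Fin 6 → Fin 6 → ℤ :=
  fun i j k l => ∑ u, ∑ v, wz i j u v * wz u v k l
def S3z : Fin 6 → Fin 6 → Fin 6 → Fin 6 → ℤ :=
  fun i j k l => ∑ u, ∑ v, wz i j u v * S2z u v k l

lemma dT2 : (∑ i, ∑ u, S2z i u i u) = 3840 := by decide
lemma dT3 : (∑ i, ∑ u, S3z i u i u) = 99840 := by decide

lemma castgz (i j : Fin 6) : ((gz i j : ℤ) : ℝ) = g6 2 i j := by
  by_cases h : i = j ∧ (i : ℕ) < 2 <;> simp [gz, g6, h]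
lemma casthz (i j : Fin 6) : ((hz i j : ℤ) : ℝ) = h6 2 i j := by
  by_cases h : i = j ∧ 2 ≤ (i : ℕ) <;> simp [hz, h6, h]
lemma castgbz (i j : Fin 6) : ((gbz i j : ℤ) : ℝ) = gb6 i j := by
  by_cases h : i = j <;> simp [gbz, gb6, h]

lemma castwz (i j k l : Fin 6) : ((wz i j k l : ℤ) : ℝ) =
    15 * KN (g6 2) (g6 2) i j k l + 5 * KN (h6 2) (h6 2) i j k l
      - 3 * KN gb6 gb6 i j k l := by
  simp only [wz, KNz, KN]
  push_cast [castgz, casthz, castgbz]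
  ring

lemma hRic (lam : ℝ) (i j : Fin 6) : ptr (Rm 2 lam (lam / 3)) i j = lam * gb6 i j := by
  fin_cases i <;> fin_cases j <;>
    simp (config := { decide := true }) [ptr, Rm, KN, g6, h6, gb6, Fin.sum_univ_six] <;> ring

lemma hJ (lam : ℝ) : Jm 2 lam (lam / 3) = 3 / 5 * lam := by
  simp only [Jm, tr2, hRic]
  simp [gb6, Fin.sum_univ_six]
  ring

lemma hP (lam : ℝ) (i j : Fin 6) : Pm 2 lam (lam / 3) i j = lam / 10 * gb6 i j := by
  simp only [Pm, hRic, hJ]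
  ring

lemma hE (lam : ℝ) : Em 2 lam (lam / 3) = fun _ _ => 0 := by
  funext i j
  simp only [Em, hP, hJ]
  ring

lemma hW (lam : ℝ) (i j k l : Fin 6) :
    Wm 2 lam (lam / 3) i j k l = lam / 30 * ((wz i j k l : ℤ) : ℝ) := by
  simp only [Wm, Rm, KN, hP, castwz, KN]
  ring

lemma hW2 (lam : ℝ) (i j k l : Fin 6) :
    W2m 2 lam (lam / 3) i j k l = lam ^ 2 / 1800 * ((S2z i j k l : ℤ) : ℝ) := by
  simp only [W2m, comp4, hW, S2z]
  push_cast
  simp only [Finset.mul_sum]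
  exact Finset.sum_congr rfl fun u _ => Finset.sum_congr rfl fun v _ => by ring

lemma hW3 (lam : ℝ) (i j k l : Fin 6) :
    W3m 2 lam (lam / 3) i j k l = lam ^ 3 / 108000 * ((S3z i j k l : ℤ) : ℝ) := by
  simp only [W3m, comp4, hW, hW2, S3z]
  push_cast
  simp only [Finset.mul_sum]
  exact Finset.sum_congr rfl fun u _ => Finset.sum_congr rfl fun v _ => by ring

lemma hT2 (lam : ℝ) : tr2 (ptr (W2m 2 lam (lam / 3))) = 32 / 15 * lam ^ 2 := by
  have h' : (∑ i, ∑ u, ((S2z i u i u : ℤ) : ℝ)) = 3840 := by exact_mod_cast dT2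
  simp only [tr2, ptr, hW2, ← Finset.mul_sum]
  rw [h']
  ring

lemma hT3 (lam : ℝ) : tr2 (ptr (W3m 2 lam (lam / 3))) = 208 / 225 * lam ^ 3 := by
  have h' : (∑ i, ∑ u, ((S3z i u i u : ℤ) : ℝ)) = 99840 := by exact_mod_cast dT3
  simp only [tr2, ptr, hW3, ← Finset.mul_sum]
  rw [h']
  ring
end AuxStmt16

theorem stmt16 (lam : ℝ) :
    (Em 2 lam (lam / 3) = fun _ _ => 0) ∧
    L1m 2 lam (lam / 3) = 0 ∧
    L2m 2 lam (lam / 3) = -(128 / 75) * lam ^ 3 ∧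
    L3m 2 lam (lam / 3) = (832 / 225) * lam ^ 3 := by
  refine ⟨hE lam, ?_, ?_, ?_⟩
  · simp [L1m, hE lam, inner2]
  · rw [L2m, hE lam, hJ lam, hT2 lam]
    simp [inner2]
    ring
  · rw [L3m, hT3 lam]
    ring
end
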